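/- arXiv:1210.0881 — 2 statements merged into one kernel-verified Lean document; each statement's English description precedes it below -/
import Mathlib

section
/- Let q > 2 be a prime power, let t ∈ 𝔽_q^*, and let f(x) = x^{q−2} + t·x^{q²−q−1}. If f is a permutation polynomial of 𝔽_{q²}, then q is odd. -/
/-! If `q` is even, `K` has characteristic `2` and `q = 2 ^ k`. For `x ≠ 0` we have
`x ^ q * f x = x ^ (2 (q - 1)) + t` and `x ^ (q ^ 2 - 1) = 1`, hence
`f x ^ (q - 1) = x ^ (q - 1) * (x ^ (2 (q - 1)) + t) ^ (q - 1)`. A permutation satisfies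
`∑ f x ^ (q - 1) = ∑ x ^ (q - 1) = 0`. Expanding binomially, `∑ x ^ ((q - 1) m)` vanishes unless
`q + 1 ∣ m`, so only the term `j = q / 2` survives and the sum is
`-t ^ (q / 2 - 1) * binom (q - 1) (q / 2)`. In characteristic `p`,
`binom (p ^ k - 1) j = (-1) ^ j`, so this is nonzero. -/

open Finset

theorem CharP.cast_choose_pow_sub_one {R : Type*} [Ring R] (p : ℕ) [hp : Fact p.Prime] [CharP R p]
    {n k : ℕ} (hk : k < p ^ n) : ((p ^ n - 1).choose k : R) = (-1) ^ k := by
  induction k with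
  | zero => simp
  | succ k ih =>
    have hpascal : (p ^ n).choose (k + 1) = (p ^ n - 1).choose k + (p ^ n - 1).choose (k + 1) := by
      rw [← Nat.choose_succ_succ', Nat.sub_add_cancel (Nat.one_le_pow _ _ hp.out.pos)]
    have hdvd : ((p ^ n).choose (k + 1) : R) = 0 :=
      (CharP.cast_eq_zero_iff R p _).mpr (hp.out.dvd_choose_pow k.succ_ne_zero hk.ne)
    rw [hpascal, Nat.cast_add, ih (by omega)] at hdvd
    rw [pow_succ, mul_neg_one, eq_neg_of_add_eq_zero_right hdvd]

namespace FiniteField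

variable {K : Type*} [Field K] [Fintype K]

theorem sum_pow_of_ne_zero {i : ℕ} (hi : i ≠ 0) :
    ∑ x : K, x ^ i = if Fintype.card K - 1 ∣ i then -1 else 0 := by
  classical
  have hzero : ∑ x : {x : K // ¬x ≠ 0}, (x : K) ^ i = 0 :=
    Fintype.sum_eq_zero _ fun x ↦ by simp [not_not.mp x.2, hi]
  rw [← sum_pow_units K i, ← Fintype.sum_subtype_add_sum_subtype (· ≠ (0 : K)), hzero, add_zero]
  exact (Fintype.sum_equiv unitsEquivNeZero _ _ fun _ ↦ rfl).symm

variable {q : ℕ} (hK : Fintype.card K = q ^ 2)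
include hK

theorem sum_pow_sub_one_mul (hq : 1 < q) {m : ℕ} (hm : m ≠ 0) :
    ∑ x : K, x ^ ((q - 1) * m) = if q + 1 ∣ m then -1 else 0 := by
  have hcard : Fintype.card K - 1 = (q - 1) * (q + 1) := by
    simpa [hK, mul_comm] using Nat.sq_sub_sq q 1
  rw [sum_pow_of_ne_zero (Nat.mul_ne_zero (by omega) hm)]
  simp only [hcard, Nat.mul_dvd_mul_iff_left (show 0 < q - 1 by omega)]

theorem sum_pow_sub_one_mul_add_pow_sub_one (hq : Even q) (hq1 : 1 < q) (t : K) :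
    ∑ x : K, x ^ (q - 1) * (x ^ (2 * (q - 1)) + t) ^ (q - 1) =
      -(t ^ (q / 2 - 1) * ((q - 1).choose (q / 2) : K)) := by
  have hexpand : ∀ x : K, x ^ (q - 1) * (x ^ (2 * (q - 1)) + t) ^ (q - 1) =
      ∑ j ∈ range q, x ^ ((q - 1) * (2 * j + 1)) * (t ^ (q - 1 - j) * (q - 1).choose j) := by
    intro x
    rw [add_pow, mul_sum, Nat.sub_add_cancel hq1.le]
    refine sum_congr rfl fun j _ ↦ ?_
    rw [← pow_mul, mul_assoc, ← mul_assoc, ← pow_add]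
    ring_nf
  have hdvd : ∀ j < q, q + 1 ∣ 2 * j + 1 ↔ j = q / 2 := by
    obtain ⟨r, rfl⟩ := hq
    intro j hj
    constructor
    · rintro ⟨c, hc⟩
      rcases c with _ | _ | c
      · omega
      · omega
      · nlinarith
    · rintro rfl
      exact ⟨1, by omega⟩
  rw [sum_congr rfl fun x _ ↦ hexpand x, sum_comm]
  simp_rw [← sum_mul]
  rw [sum_congr rfl fun j _ ↦ by rw [sum_pow_sub_one_mul hK hq1 (by omega : 2 * j + 1 ≠ 0)]]
  rw [sum_eq_single_of_mem (q / 2) (mem_range.mpr (by omega)), if_pos ((hdvd _ (by omega)).mpr rfl)]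
  · rw [neg_one_mul, show q - 1 - q / 2 = q / 2 - 1 by obtain ⟨r, rfl⟩ := hq; omega]
  · intro j hj hne
    rw [if_neg (mt (hdvd j (mem_range.mp hj)).mp hne), zero_mul]

theorem pow_sub_one_add_mul_pow_sub_one (hq : 2 < q) (t x : K) :
    (x ^ (q - 2) + t * x ^ (q ^ 2 - q - 1)) ^ (q - 1) =
      x ^ (q - 1) * (x ^ (2 * (q - 1)) + t) ^ (q - 1) := by
  have hq' : q + 1 < q ^ 2 := by nlinarith
  rcases eq_or_ne x 0 with rfl | hx
  · rw [zero_pow (by omega), zero_pow (by omega), mul_zero, add_zero, zero_pow (by omega), zero_mul]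
  have hsq : q ^ 2 - 1 = (q - 1) * (q + 1) := by simpa [mul_comm] using Nat.sq_sub_sq q 1
  have hx1 : x ^ ((q - 1) * (q + 1)) = 1 := by
    rw [← hsq, ← hK]; exact pow_card_sub_one_eq_one x hx
  have hmul : x ^ q * (x ^ (q - 2) + t * x ^ (q ^ 2 - q - 1)) = x ^ (2 * (q - 1)) + t := by
    rw [mul_add, ← pow_add, mul_left_comm, ← pow_add, show q + (q ^ 2 - q - 1) = q ^ 2 - 1 by omega,
      hsq, hx1, mul_one, show q + (q - 2) = 2 * (q - 1) by omega]
  calc (x ^ (q - 2) + t * x ^ (q ^ 2 - q - 1)) ^ (q - 1)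
      = x ^ ((q - 1) * (q + 1)) * (x ^ (q - 2) + t * x ^ (q ^ 2 - q - 1)) ^ (q - 1) := by
        rw [hx1, one_mul]
    _ = x ^ (q - 1) * (x ^ q * (x ^ (q - 2) + t * x ^ (q ^ 2 - q - 1))) ^ (q - 1) := by
        rw [mul_pow, ← pow_mul, ← mul_assoc, ← pow_add]
        ring_nf
    _ = x ^ (q - 1) * (x ^ (2 * (q - 1)) + t) ^ (q - 1) := by rw [hmul]

theorem charP_two_and_exists_eq_two_pow (hq : Even q) : CharP K 2 ∧ ∃ k, q = 2 ^ k := by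
  have hchar : ringChar K = 2 := even_card_iff_char_two.mpr <| by
    rw [hK, ← Nat.even_iff]; exact Nat.even_pow.mpr ⟨hq, two_ne_zero⟩
  have := ringChar.of_eq hchar
  obtain ⟨n, -, hcard⟩ := card K 2
  obtain ⟨k, -, hk⟩ := (Nat.dvd_prime_pow Nat.prime_two).mp ⟨q, by rw [← hcard, hK, sq]⟩
  exact ⟨this, k, hk⟩

end FiniteField

theorem stmt_17_general (q : ℕ) (hq2 : 2 < q)
    (K : Type) [Field K] [Fintype K] (hK : Fintype.card K = q ^ 2)
    (t : K) (ht0 : t ≠ 0)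
    (hbij : Function.Bijective (fun x : K => x ^ (q - 2) + t * x ^ (q ^ 2 - q - 1))) :
    Odd q := by
  by_contra hodd
  rw [Nat.not_odd_iff_even] at hodd
  obtain ⟨_, k, hk⟩ := FiniteField.charP_two_and_exists_eq_two_pow hK hodd
  have hlt : q - 1 < Fintype.card K - 1 := by
    have : q < q ^ 2 := by nlinarith
    omega
  have hsum := hbij.sum_comp (· ^ (q - 1))
  simp only [FiniteField.pow_sub_one_add_mul_pow_sub_one hK hq2,
    FiniteField.sum_pow_sub_one_mul_add_pow_sub_one hK hodd (by omega),
    FiniteField.sum_pow_lt_card_sub_one K _ hlt] at hsum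
  rw [hk, CharP.cast_choose_pow_sub_one 2 (Nat.div_lt_self (by positivity) one_lt_two)] at hsum
  simp [ht0] at hsum

/-- Let `q > 2` be a prime power, `t ∈ 𝔽_q^*`, and
`f(x) = x^(q-2) + t·x^(q²-q-1)`. If `f` is a permutation polynomial of `𝔽_{q²}`,
then `q` is odd. -/
theorem stmt_17 (p m q : ℕ) (hp : p.Prime) (hq : q = p ^ m) (hq2 : 2 < q)
    (K : Type) [Field K] [Fintype K] (hK : Fintype.card K = q ^ 2)
    (t : K) (ht0 : t ≠ 0) (htq : t ^ q = t)
    (hbij : Function.Bijective (fun x : K => x ^ (q - 2) + t * x ^ (q ^ 2 - q - 1))) :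
    Odd q :=
  stmt_17_general q hq2 K hK t ht0 hbij
end

section
/- Let q be an odd prime power, let t ∈ 𝔽_q^*, and let f(x) = x^{q−2} + t·x^{q²−q−1}. Set ε = (−1)^{(q+1)/2} · t^{(q−1)/2} ∈ 𝔽_q (so ε = ±1, and t^{(q−1)/2} = η(t) is the quadratic character of t). If f is a permutation polynomial of 𝔽_{q²}, then t² − 2εt − 3 = 0 in 𝔽_q, i.e., (t + ε)(t − 3ε) = 0, so t = −ε or t = 3ε. -/
/-!
Write `q = 2r + 1`. Since `f` permutes `𝔽_{q²}`, the moment `∑ₓ f(x)^(2q-2)` equals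
`∑ y^(2q-2) = 0`. Expanding binomially, `∑ₓ x^E` is `-1` or `0` according as `q² - 1 ∣ E`,
and exactly the indices `k ∈ {r, 2r+1, 3r+2}` survive. In characteristic `p` the identity
`(1+X)^(2q) = (1+X^q)^2` gives `C(2q-2, a) = (-1)^a (a+1)` for `a < q`, and with `t^(2r) = 1`
the surviving terms collapse to `σt² + 2t - 3σ = 0` for `σ = (-1)^r t^r = -ε`, which is the
claimed quadratic after multiplying by `σ`.
-/

open Finset Polynomial

theorem FiniteField.sum_pow_eq_ite {K : Type*} [Field K] [Fintype K] {E : ℕ} (hE : E ≠ 0) :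
    ∑ x : K, x ^ E = if Fintype.card K - 1 ∣ E then -1 else 0 := by
  classical
  rw [Fintype.sum_eq_add_sum_subtype_ne _ 0, zero_pow hE, zero_add,
    ← FiniteField.sum_pow_units K E]
  exact (Fintype.sum_equiv unitsEquivNeZero _ _ fun _ ↦ rfl).symm

theorem FiniteField.sum_add_mul_pow_pow {K : Type*} [Field K] [Fintype K] {a b n : ℕ}
    (ha : a ≠ 0) (hb : b ≠ 0) (hn : n ≠ 0) (t : K) :
    ∑ x : K, (x ^ a + t * x ^ b) ^ n = -∑ k ∈ (range (n + 1)).filter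
      (fun k ↦ Fintype.card K - 1 ∣ a * k + b * (n - k)), t ^ (n - k) * n.choose k := by
  have hE : ∀ k ∈ range (n + 1), a * k + b * (n - k) ≠ 0 := by
    intro k hk
    rw [mem_range] at hk
    rcases Nat.eq_zero_or_pos k with rfl | hk0
    · simp [hb, hn]
    · exact (Nat.add_pos_left (Nat.mul_pos (Nat.pos_of_ne_zero ha) hk0) _).ne'
  calc ∑ x : K, (x ^ a + t * x ^ b) ^ n
      = ∑ k ∈ range (n + 1),
          (∑ x : K, x ^ (a * k + b * (n - k))) * (t ^ (n - k) * n.choose k) := by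
        simp_rw [add_pow, sum_mul]
        rw [sum_comm]
        refine sum_congr rfl fun k _ ↦ sum_congr rfl fun x _ ↦ ?_
        rw [pow_add, pow_mul, pow_mul, mul_pow]
        ring
    _ = _ := by
        rw [sum_filter, ← sum_neg_distrib]
        refine sum_congr rfl fun k hk ↦ ?_
        rw [FiniteField.sum_pow_eq_ite (hE k hk)]
        split_ifs <;> simp

theorem sq_sub_one_dvd_iff {q r k : ℕ} (hq : q = 2 * r + 1) (hk : k ≤ 2 * q - 2) :
    q ^ 2 - 1 ∣ (q - 2) * k + (q ^ 2 - q - 1) * (2 * q - 2 - k) ↔ r + 1 ∣ k + 1 := by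
  subst hq
  rcases Nat.eq_zero_or_pos r with rfl | hr
  · simp
  have hsq : (2 * r + 1) ^ 2 - 1 = 4 * r * (r + 1) := by
    zify [show 1 ≤ (2 * r + 1) ^ 2 by nlinarith]
    ring
  have key : (2 * r + 1 - 2) * k + ((2 * r + 1) ^ 2 - (2 * r + 1) - 1) * (2 * (2 * r + 1) - 2 - k)
      + 4 * r * (r + 1) * 2 = 4 * r * (r + 1) * (2 * (2 * r + 1) - 2 - k) + 4 * r * (k + 1) := by
    zify [show 2 ≤ 2 * r + 1 by omega, show 2 * r + 1 ≤ (2 * r + 1) ^ 2 by nlinarith,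
      Nat.le_sub_of_add_le (show 1 + (2 * r + 1) ≤ (2 * r + 1) ^ 2 by nlinarith), hk,
      show 2 ≤ 2 * (2 * r + 1) by omega]
    ring
  rw [hsq, ← Nat.dvd_add_left (dvd_mul_right _ 2), key, Nat.dvd_add_right (dvd_mul_right _ _),
    Nat.mul_dvd_mul_iff_left (by positivity)]

theorem Finset.filter_range_dvd_succ (r : ℕ) :
    (range (4 * r + 3)).filter (fun k ↦ r + 1 ∣ k + 1) = {r, 2 * r + 1, 3 * r + 2} := by
  ext k
  simp only [mem_filter, mem_range, mem_insert, mem_singleton]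
  constructor
  · rintro ⟨hk, j, hj⟩
    have hj4 : j < 4 := Nat.lt_of_mul_lt_mul_left (a := r + 1) (by rw [← hj]; linarith)
    interval_cases j <;> omega
  · rintro (rfl | rfl | rfl)
    exacts [⟨by omega, 1, by ring⟩, ⟨by omega, 2, by ring⟩, ⟨by omega, 3, by ring⟩]

theorem Nat.add_two_choose_add_two (n a : ℕ) :
    (n + 2).choose (a + 2) = n.choose a + 2 * n.choose (a + 1) + n.choose (a + 2) := by
  rw [Nat.choose_succ_succ', Nat.choose_succ_succ', Nat.choose_succ_succ' n]
  ring

theorem cast_choose_two_mul_prime_pow_eq_zero {R : Type*} [CommRing R] (p : ℕ) [Fact p.Prime]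
    [CharP R p] (m : ℕ) {a : ℕ} (ha0 : a ≠ 0) (haq : a ≠ p ^ m) (ha : a ≠ 2 * p ^ m) :
    ((2 * p ^ m).choose a : R) = 0 := by
  have hfrob : ((X : R[X]) + 1) ^ (2 * p ^ m) = X ^ (2 * p ^ m) + 2 * X ^ p ^ m + 1 := by
    rw [mul_comm, pow_mul, add_pow_char_pow]
    ring
  rw [← coeff_X_add_one_pow, hfrob]
  simp [coeff_X_pow, coeff_one, ha0, haq, ha]

theorem cast_choose_two_mul_prime_pow_sub_two {R : Type*} [CommRing R] (p : ℕ) [Fact p.Prime]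
    [CharP R p] (m : ℕ) {a : ℕ} (ha : a < p ^ m) :
    ((2 * p ^ m - 2).choose a : R) = (-1) ^ a * (a + 1) := by
  set q := p ^ m
  let P : ℕ → Prop := fun a ↦ ((2 * q - 2).choose a : R) = (-1) ^ a * (a + 1)
  suffices h : ∀ a, a + 1 < q → P a ∧ P (a + 1) by
    rcases a with _ | a
    · simp
    · exact (h a ha).2
  intro a
  induction a with
  | zero =>
    intro hq
    have hq0 : (q : R) = 0 :=
      (CharP.cast_eq_zero_iff R p q).mpr (dvd_pow_self p (by rintro rfl; simp [q] at hq))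
    refine ⟨by simp [P], ?_⟩
    simp only [P, zero_add, Nat.choose_one_right]
    push_cast [Nat.cast_sub (show 2 ≤ 2 * q by omega), hq0]
    ring
  | succ a ih =>
    intro ha
    obtain ⟨h0, h1⟩ := ih (by omega)
    refine ⟨h1, ?_⟩
    -- Pascal's rule twice, with the left side `C(2q, a + 2)` vanishing in characteristic `p`.
    have hrec := congrArg (Nat.cast : ℕ → R) (Nat.add_two_choose_add_two (2 * q - 2) a)
    rw [show 2 * q - 2 + 2 = 2 * q by omega, cast_choose_two_mul_prime_pow_eq_zero p m
      (by omega) (by omega) (by omega)] at hrec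
    simp only [P] at h0 h1 ⊢
    push_cast at hrec h1 ⊢
    rw [h0, h1] at hrec
    linear_combination -hrec

theorem two_mul_add_one_eq_zero_of_prime_pow {R : Type*} [CommRing R] {p : ℕ} [CharP R p]
    {m r : ℕ} (hq : p ^ m = 2 * r + 1) (hr : r ≠ 0) :
    (2 * r + 1 : R) = 0 := by
  exact_mod_cast (CharP.cast_eq_zero_iff R p _).mpr
    (hq ▸ dvd_pow_self p (by rintro rfl; simp at hq; omega))

theorem neg_one_pow_mul_pow_sq {R : Type*} [CommRing R] {t : R} {n r : ℕ}
    (h : t ^ (2 * r) = 1) : ((-1) ^ n * t ^ r) ^ 2 = 1 := by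
  rw [mul_pow, ← pow_mul, ← pow_mul, mul_comm r, h, mul_comm n, pow_mul, neg_one_sq, one_pow,
    one_mul]

section OddPrimePower

variable {R : Type*} [CommRing R] {p : ℕ} [Fact p.Prime] [CharP R p] {m r : ℕ}

theorem cast_choose_four_mul_self (hq : p ^ m = 2 * r + 1) :
    ((4 * r).choose r : R) = (-1) ^ r * (r + 1) := by
  rw [show 4 * r = 2 * p ^ m - 2 by omega]
  exact cast_choose_two_mul_prime_pow_sub_two p m (by omega)

theorem cast_choose_four_mul_two_mul_add_one (hq : p ^ m = 2 * r + 1) (hr : r ≠ 0) :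
    ((4 * r).choose (2 * r + 1) : R) = 1 := by
  have hq0 := two_mul_add_one_eq_zero_of_prime_pow (R := R) hq hr
  rw [← Nat.choose_symm (by omega), show 4 * r - (2 * r + 1) = 2 * r - 1 by omega,
    show 4 * r = 2 * p ^ m - 2 by omega, cast_choose_two_mul_prime_pow_sub_two p m (by omega),
    Odd.neg_one_pow ⟨r - 1, by omega⟩, Nat.cast_sub (by omega)]
  push_cast
  linear_combination -hq0

theorem cast_choose_four_mul_three_mul_add_two (hq : p ^ m = 2 * r + 1) (hr : r ≠ 0) :
    ((4 * r).choose (3 * r + 2) : R) = (-1) ^ r * (r - 1) := by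
  obtain rfl | hr1 := eq_or_ne r 1
  · simp
  obtain ⟨s, rfl⟩ : ∃ s, r = s + 2 := ⟨r - 2, by omega⟩
  rw [← Nat.choose_symm (by omega), show 4 * (s + 2) - (3 * (s + 2) + 2) = s by omega,
    show 4 * (s + 2) = 2 * p ^ m - 2 by omega, cast_choose_two_mul_prime_pow_sub_two p m (by omega)]
  push_cast
  ring

theorem sq_sub_two_mul_sub_three_eq_zero (hq : p ^ m = 2 * r + 1) (hr : r ≠ 0) {t : R}
    (h1 : t ^ (2 * r) = 1)
    (h : t ^ (3 * r + 2) * (4 * r).choose r + t ^ (2 * r + 1) * (4 * r).choose (2 * r + 1)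
      + t ^ r * (4 * r).choose (3 * r + 2) = 0) :
    t ^ 2 - 2 * ((-1) ^ (r + 1) * t ^ r) * t - 3 = 0 := by
  have hq0 := two_mul_add_one_eq_zero_of_prime_pow (R := R) hq hr
  have hσ := neg_one_pow_mul_pow_sq (n := r) h1
  rw [cast_choose_four_mul_self hq, cast_choose_four_mul_two_mul_add_one hq hr,
    cast_choose_four_mul_three_mul_add_two hq hr] at h
  linear_combination 2 * ((-1) ^ r * t ^ r) * h
    - 2 * ((-1) ^ r * t ^ r) * ((-1) ^ r * t ^ r * t ^ 2 * (r + 1) + t) * h1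
    - 2 * (t ^ 2 * (r + 1) + r - 1) * hσ - (t ^ 2 + 1) * hq0

end OddPrimePower

theorem sum_filter_choose_eq_zero_of_bijective {K : Type*} [Field K] [Fintype K] {q r : ℕ}
    (hq : q = 2 * r + 1) (hr : r ≠ 0) (hK : Fintype.card K = q ^ 2) (t : K)
    (hbij : Function.Bijective fun x : K ↦ x ^ (q - 2) + t * x ^ (q ^ 2 - q - 1)) :
    ∑ k ∈ (range (2 * q - 2 + 1)).filter (fun k ↦ r + 1 ∣ k + 1),
      t ^ (2 * q - 2 - k) * (2 * q - 2).choose k = 0 := by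
  have hq3 : 3 * q ≤ q ^ 2 := by rw [sq]; exact Nat.mul_le_mul_right q (by omega)
  have hmoment : ∑ x : K, (x ^ (q - 2) + t * x ^ (q ^ 2 - q - 1)) ^ (2 * q - 2) = 0 := by
    rw [Fintype.sum_bijective _ hbij _ (· ^ (2 * q - 2)) fun _ ↦ rfl]
    exact FiniteField.sum_pow_lt_card_sub_one _ _ (by omega)
  rwa [FiniteField.sum_add_mul_pow_pow (by omega) (by omega) (by omega), neg_eq_zero, hK,
    filter_congr fun k hk ↦ sq_sub_one_dvd_iff hq (by rw [mem_range] at hk; omega)] at hmoment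

/-- Multiplying by `t²` and adding the two vanishing terms `k = 4r + 1, 4r + 2` makes the
surviving indices `{r, 2r+1, 3r+2}` also for `r = 1`, where `3r + 2 > 4r`. -/
theorem pow_mul_choose_add_eq_zero_of_sum_filter {R : Type*} [CommRing R] {r : ℕ} {t : R}
    (h : ∑ k ∈ (range (4 * r + 1)).filter (fun k ↦ r + 1 ∣ k + 1),
      t ^ (4 * r - k) * (4 * r).choose k = 0) :
    t ^ (3 * r + 2) * (4 * r).choose r + t ^ (2 * r + 1) * (4 * r).choose (2 * r + 1)
      + t ^ r * (4 * r).choose (3 * r + 2) = 0 := by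
  have h2 : ∑ k ∈ (range (4 * r + 3)).filter (fun k ↦ r + 1 ∣ k + 1),
      t ^ (4 * r + 2 - k) * (4 * r).choose k = 0 := by
    rw [sum_filter, sum_range_succ, sum_range_succ, ← sum_filter,
      Nat.choose_eq_zero_of_lt (by omega : 4 * r < 4 * r + 1),
      Nat.choose_eq_zero_of_lt (by omega : 4 * r < 4 * r + 1 + 1)]
    simp only [Nat.cast_zero, mul_zero, ite_self, add_zero]
    rw [← mul_zero (t ^ 2), ← h, mul_sum]
    refine sum_congr rfl fun k hk ↦ ?_
    rw [mem_filter, mem_range] at hk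
    rw [← mul_assoc, ← pow_add, show 2 + (4 * r - k) = 4 * r + 2 - k by omega]
  rwa [filter_range_dvd_succ, sum_insert (by simp only [mem_insert, mem_singleton]; omega),
    sum_insert (by simp only [mem_singleton]; omega), sum_singleton,
    show 4 * r + 2 - r = 3 * r + 2 by omega, show 4 * r + 2 - (2 * r + 1) = 2 * r + 1 by omega,
    show 4 * r + 2 - (3 * r + 2) = r by omega, ← add_assoc] at h2

theorem stmt_18_general (p m q : ℕ) (hp : p.Prime) (hq : q = p ^ m) (hqodd : Odd q)
    (K : Type) [Field K] [Fintype K] (hK : Fintype.card K = q ^ 2)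
    (t : K) (ht0 : t ≠ 0) (htq : t ^ q = t)
    (ε : K) (hε : ε = (-1) ^ ((q + 1) / 2) * t ^ ((q - 1) / 2))
    (hbij : Function.Bijective (fun x : K => x ^ (q - 2) + t * x ^ (q ^ 2 - q - 1))) :
    t ^ 2 - 2 * ε * t - 3 = 0 ∧ (t + ε) * (t - 3 * ε) = 0 ∧ (t = -ε ∨ t = 3 * ε) := by
  obtain ⟨r, rfl⟩ := hqodd
  have hr : r ≠ 0 := by
    rintro rfl
    simpa [hK] using Fintype.one_lt_card (α := K)
  have := Fact.mk hp
  have : CharP K p := charP_of_card_eq_prime_pow (f := m * 2) (by rw [hK, hq, pow_mul])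
  have h1 : t ^ (2 * r) = 1 := mul_right_cancel₀ ht0 (by rw [← pow_succ, htq, one_mul])
  have hε' : ε = (-1) ^ (r + 1) * t ^ r := by
    rw [hε, show (2 * r + 1 + 1) / 2 = r + 1 by omega, show (2 * r + 1 - 1) / 2 = r by omega]
  have hsum := sum_filter_choose_eq_zero_of_bijective rfl hr hK t hbij
  rw [show 2 * (2 * r + 1) - 2 = 4 * r by omega] at hsum
  have hquad : t ^ 2 - 2 * ε * t - 3 = 0 :=
    hε' ▸ sq_sub_two_mul_sub_three_eq_zero hq.symm hr h1
      (pow_mul_choose_add_eq_zero_of_sum_filter hsum)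
  have hε2 : ε ^ 2 = 1 := hε' ▸ neg_one_pow_mul_pow_sq h1
  have hfac : (t + ε) * (t - 3 * ε) = 0 := by linear_combination hquad - 3 * hε2
  exact ⟨hquad, hfac, (mul_eq_zero.mp hfac).imp eq_neg_of_add_eq_zero_left sub_eq_zero.mp⟩

/-- Let `q` be an odd prime power, `t ∈ 𝔽_q^*`, `f(x) = x^(q-2) + t·x^(q²-q-1)`,
and `ε = (-1)^((q+1)/2)·t^((q-1)/2)` (so `ε = ±1`, `t^((q-1)/2) = η(t)` the
quadratic character). If `f` is a permutation polynomial of `𝔽_{q²}`, then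
`t² - 2εt - 3 = 0`, i.e. `(t+ε)(t-3ε) = 0`, so `t = -ε` or `t = 3ε`. -/
theorem stmt_18 (p m q : ℕ) (hp : p.Prime) (hq : q = p ^ m) (hq2 : 2 < q) (hqodd : Odd q)
    (K : Type) [Field K] [Fintype K] (hK : Fintype.card K = q ^ 2)
    (t : K) (ht0 : t ≠ 0) (htq : t ^ q = t)
    (ε : K) (hε : ε = (-1) ^ ((q + 1) / 2) * t ^ ((q - 1) / 2))
    (hbij : Function.Bijective (fun x : K => x ^ (q - 2) + t * x ^ (q ^ 2 - q - 1))) :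
    t ^ 2 - 2 * ε * t - 3 = 0 ∧ (t + ε) * (t - 3 * ε) = 0 ∧ (t = -ε ∨ t = 3 * ε) :=
  stmt_18_general p m q hp hq hqodd K hK t ht0 htq ε hε hbij
end
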